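/- Fix α₁ ≥ α₂ ≥ 0 and h ∈ ℝ. Define g : ℝ → ℝ by g(x) = η_soft(x; α₁) if |x| > α₁ + h, g(x) = sign(x)·max(h,0) if α₂ + h < |x| ≤ α₁ + h, and g(x) = η_soft(x; α₂) if |x| ≤ α₂ + h, where η_soft(x;α) = sign(x)max(|x|-α,0). If h ≥ 0, then g is odd, nondecreasing, and 1-Lipschitz. -/

import Mathlib

/-- The soft-thresholding function `η(v; α) = sign(v) · max(|v| - α, 0)`. -/
noncomputable def etaSoft (v α : ℝ) : ℝ := Real.sign v * max (|v| - α) 0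

/-- The 2-level SLOPE limiting scalar function with penalty levels `α₁ ≥ α₂ ≥ 0`
and shared magnitude `h`. -/
noncomputable def twoLevelEta (α₁ α₂ h x : ℝ) : ℝ :=
  if α₁ + h < |x| then etaSoft x α₁
  else if α₂ + h < |x| then Real.sign x * max h 0
  else etaSoft x α₂

/-!
Soft thresholding at level `a ≥ 0` is `x ↦ x - clip a x`, where `clip a` is the projection onto
`[-a, a]`. The monotone 1-Lipschitz maps `ℝ → ℝ` are exactly those with `0 ≤ f y - f x ≤ y - x`
for `x ≤ y`, so they are closed under composition and under `f ↦ id - f`, and they contain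
`clip a`. The 2-level function is `η(·; α₂)` followed by `u ↦ u - clip (α₁ - α₂) (η(u; h))`:
after the shift by `α₂`, the second map holds the value `h` on a plateau of length `α₁ - α₂`.
-/

def clip (a x : ℝ) : ℝ := max (-a) (min x a)

lemma monotone_clip (a : ℝ) : Monotone (clip a) :=
  fun _ _ hxy => max_le_max le_rfl (min_le_min hxy le_rfl)

lemma lipschitzWith_one_clip (a : ℝ) : LipschitzWith 1 (clip a) :=
  (LipschitzWith.id.min_const a).const_max (-a)

lemma clip_neg {a : ℝ} (ha : 0 ≤ a) (x : ℝ) : clip a (-x) = -clip a x := by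
  simp only [clip, max_def, min_def]
  split_ifs <;> linarith

lemma clip_of_nonneg {a x : ℝ} (ha : 0 ≤ a) (hx : 0 ≤ x) : clip a x = min x a :=
  max_eq_right (by linarith [le_min hx ha])

lemma etaSoft_neg (x a : ℝ) : etaSoft (-x) a = -etaSoft x a := by
  simp only [etaSoft, abs_neg, Real.sign_neg, neg_mul]

lemma etaSoft_of_nonneg {a x : ℝ} (ha : 0 ≤ a) (hx : 0 ≤ x) : etaSoft x a = max (x - a) 0 := by
  rcases hx.eq_or_lt with rfl | hx
  · simp [etaSoft, ha]
  · rw [etaSoft, Real.sign_of_pos hx, abs_of_pos hx, one_mul]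

lemma etaSoft_eq_sub_clip {a : ℝ} (ha : 0 ≤ a) (x : ℝ) : etaSoft x a = x - clip a x := by
  rcases lt_trichotomy x 0 with hx | rfl | hx
  · rw [etaSoft, Real.sign_of_neg hx, abs_of_neg hx, clip]
    simp only [max_def, min_def]
    split_ifs <;> linarith
  · simp [etaSoft, clip, ha]
  · rw [etaSoft, Real.sign_of_pos hx, abs_of_pos hx, clip]
    simp only [max_def, min_def]
    split_ifs <;> linarith

lemma LipschitzWith.monotone_id_sub {f : ℝ → ℝ} (hf : LipschitzWith 1 f) :
    Monotone fun x => x - f x := by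
  intro x y hxy
  have := (le_abs_self _).trans (hf.dist_le_mul y x)
  rw [Real.dist_eq, NNReal.coe_one, one_mul, abs_of_nonneg (sub_nonneg.2 hxy)] at this
  dsimp only
  linarith

lemma Monotone.lipschitzWith_one_id_sub {f : ℝ → ℝ} (hf : Monotone f) (hf' : LipschitzWith 1 f) :
    LipschitzWith 1 fun x => x - f x := by
  refine LipschitzWith.of_le_add fun x y => ?_
  rw [Real.dist_eq]
  rcases le_total x y with hxy | hxy
  · linarith [hf'.monotone_id_sub hxy, abs_nonneg (x - y)]
  · linarith [hf hxy, le_abs_self (x - y)]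

lemma monotone_etaSoft {a : ℝ} (ha : 0 ≤ a) : Monotone fun x => etaSoft x a := by
  simpa only [etaSoft_eq_sub_clip ha] using (lipschitzWith_one_clip a).monotone_id_sub

lemma lipschitzWith_one_etaSoft {a : ℝ} (ha : 0 ≤ a) : LipschitzWith 1 fun x => etaSoft x a := by
  simpa only [etaSoft_eq_sub_clip ha] using
    (monotone_clip a).lipschitzWith_one_id_sub (lipschitzWith_one_clip a)

lemma twoLevelEta_neg (α₁ α₂ h x : ℝ) : twoLevelEta α₁ α₂ h (-x) = -twoLevelEta α₁ α₂ h x := by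
  simp only [twoLevelEta, etaSoft, abs_neg, Real.sign_neg]
  split_ifs <;> ring

lemma twoLevelEta_eq {α₁ α₂ h : ℝ} (h12 : α₂ ≤ α₁) (h2 : 0 ≤ α₂) (hh : 0 ≤ h) (x : ℝ) :
    twoLevelEta α₁ α₂ h x = etaSoft x α₂ - clip (α₁ - α₂) (etaSoft (etaSoft x α₂) h) := by
  have of_nonneg : ∀ x, 0 ≤ x →
      twoLevelEta α₁ α₂ h x = etaSoft x α₂ - clip (α₁ - α₂) (etaSoft (etaSoft x α₂) h) := by
    intro x hx
    rw [twoLevelEta, abs_of_nonneg hx, etaSoft_of_nonneg (h2.trans h12) hx, etaSoft_of_nonneg h2 hx,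
      etaSoft_of_nonneg hh (le_max_right _ _), clip_of_nonneg (sub_nonneg.2 h12) (le_max_right _ _)]
    split_ifs with h₁ h₂
    on_goal 2 => rw [Real.sign_of_pos (by linarith), one_mul]
    all_goals (simp only [max_def, min_def]; split_ifs <;> linarith)
  rcases le_total 0 x with hx | hx
  · exact of_nonneg x hx
  · obtain ⟨y, rfl⟩ : ∃ y, x = -y := ⟨-x, (neg_neg x).symm⟩
    rw [twoLevelEta_neg, of_nonneg y (neg_nonpos.1 hx), etaSoft_neg, etaSoft_neg,
      clip_neg (sub_nonneg.2 h12), neg_sub_neg, neg_sub]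

/-- for `α₁ ≥ α₂ ≥ 0` and `h ≥ 0`, the 2-level SLOPE limiting scalar
function is odd, nondecreasing, and 1-Lipschitz. -/
theorem stmt_14 (α₁ α₂ h : ℝ) (h12 : α₂ ≤ α₁) (h2 : 0 ≤ α₂) (hh : 0 ≤ h) :
    (∀ x : ℝ, twoLevelEta α₁ α₂ h (-x) = -twoLevelEta α₁ α₂ h x) ∧
    Monotone (twoLevelEta α₁ α₂ h) ∧
    LipschitzWith 1 (twoLevelEta α₁ α₂ h) := by
  let ψ := clip (α₁ - α₂) ∘ fun u => etaSoft u h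
  have hψ : Monotone ψ := (monotone_clip _).comp (monotone_etaSoft hh)
  have hψ' : LipschitzWith 1 ψ := by
    simpa only [mul_one] using (lipschitzWith_one_clip _).comp (lipschitzWith_one_etaSoft hh)
  have hg : twoLevelEta α₁ α₂ h = (fun u => u - ψ u) ∘ fun x => etaSoft x α₂ :=
    funext (twoLevelEta_eq h12 h2 hh)
  refine ⟨twoLevelEta_neg α₁ α₂ h, ?_, ?_⟩
  · rw [hg]
    exact hψ'.monotone_id_sub.comp (monotone_etaSoft h2)
  · rw [hg]
    simpa only [mul_one] using (hψ.lipschitzWith_one_id_sub hψ').comp (lipschitzWith_one_etaSoft h2)
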